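/- Morley inscribed-conic corollary (via condition (3) of Theorem 1): in any triangle ABC, the six trisector cevian lines AA₁, AA₂, BB₁, BB₂, CC₁, CC₂ touch a common conic; in the dual formulation, there exists a nonzero quadratic form on ℝ³ vanishing at the homogeneous line coordinates of all six trisector lines. -/

import Mathlib

open EuclideanGeometry

abbrev Pt := EuclideanSpace ℝ (Fin 2)

/-- `L = (u, v, w)` are homogeneous line coordinates of the line through the
points `P` and `Q`. -/
def IsLineCoord (P Q : Pt) (L : Fin 3 → ℝ) : Prop :=
  (L 0, L 1) ≠ (0, 0) ∧
  L 0 * P 0 + L 1 * P 1 + L 2 = 0 ∧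
  L 0 * Q 0 + L 1 * Q 1 + L 2 = 0

/-- A family of lines, each given by a pair of points spanning it, touches a common
conic (dual formulation): a nonzero quadratic form on ℝ³ vanishes at the homogeneous
line coordinates of each line. -/
def TouchCommonConic (ls : List (Pt × Pt)) : Prop :=
  ∃ Q : QuadraticForm ℝ (Fin 3 → ℝ), Q ≠ 0 ∧
    ∀ pq ∈ ls, ∀ L : Fin 3 → ℝ, IsLineCoord pq.1 pq.2 L → Q L = 0

/-!
If `P₁, P₂` on `BC` are the feet of isogonal cevians from `A` (`∠BAP₁ = ∠P₂AC`), comparing the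
areas of the triangles `ABP₁, ABP₂, AP₁C, AP₂C` gives Steiner's relation
`BP₁ · BP₂ / (P₁C · P₂C) = AB² / AC²`. Multiplied over the three vertices the side lengths
cancel, leaving the dual Carnot condition `∏ BP₁ · BP₂ = ∏ P₁C · P₂C` for six cevians to touch a
conic. The trisectors at each vertex are isogonal.
-/

open AffineMap

namespace Morley

def cross (x y : Pt) : ℝ := x 0 * y 1 - x 1 * y 0

lemma cross_lineMap_right (A B C : Pt) (s : ℝ) :
    cross (B - A) (lineMap B C s - A) = s * cross (B - A) (C - A) := by
  simp only [cross, lineMap_apply_module', PiLp.add_apply, PiLp.sub_apply, PiLp.smul_apply,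
    smul_eq_mul]
  ring

lemma cross_lineMap_left (A B C : Pt) (s : ℝ) :
    cross (lineMap B C s - A) (C - A) = (1 - s) * cross (B - A) (C - A) := by
  simp only [cross, lineMap_apply_module', PiLp.add_apply, PiLp.sub_apply, PiLp.smul_apply,
    smul_eq_mul]
  ring

lemma sin_angle_mul_dist_mul_dist (P A Q : Pt) :
    Real.sin (∠ P A Q) * (dist P A * dist Q A) = |cross (P - A) (Q - A)| := by
  rw [angle, dist_eq_norm_vsub, dist_eq_norm_vsub,
    InnerProductGeometry.sin_angle_mul_norm_mul_norm]
  simp only [vsub_eq_sub, EuclideanSpace.inner_eq_star_dotProduct, star_trivial, dotProduct,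
    Fin.sum_univ_two]
  rw [← Real.sqrt_sq_eq_abs, cross]
  congr 1
  ring

lemma cross_ne_zero_of_not_collinear {A B C : Pt} (h : ¬ Collinear ℝ {B, A, C}) :
    cross (B - A) (C - A) ≠ 0 := by
  obtain ⟨hBA, hCA, hsin⟩ : B ≠ A ∧ C ≠ A ∧ Real.sin (∠ B A C) ≠ 0 := by
    simpa [not_or] using collinear_iff_eq_or_eq_or_sin_eq_zero.not.1 h
  rw [← abs_ne_zero, ← sin_angle_mul_dist_mul_dist]
  exact mul_ne_zero hsin (mul_ne_zero (dist_ne_zero.2 hBA) (dist_ne_zero.2 hCA))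

theorem mul_dist_sq_eq_of_isogonal {A B C : Pt} {s₁ s₂ : ℝ} (hABC : ¬ Collinear ℝ {B, A, C})
    (h₁ : Sbtw ℝ B (lineMap B C s₁) C) (h₂ : Sbtw ℝ B (lineMap B C s₂) C)
    (hiso : ∠ B A (lineMap B C s₁) = ∠ (lineMap B C s₂) A C) :
    s₁ * s₂ * dist A C ^ 2 = (1 - s₁) * (1 - s₂) * dist A B ^ 2 := by
  obtain ⟨-, hs₁, hs₁'⟩ := sbtw_lineMap_iff.1 h₁
  obtain ⟨-, hs₂, hs₂'⟩ := sbtw_lineMap_iff.1 h₂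
  set P₁ := lineMap B C s₁
  set P₂ := lineMap B C s₂
  set K := |cross (B - A) (C - A)|
  have hK : K ≠ 0 := abs_ne_zero.2 (cross_ne_zero_of_not_collinear hABC)
  have hcompl : ∠ P₁ A C = ∠ B A P₂ := by
    linarith [angle_add_angle_eq_of_sbtw (p := A) h₁, angle_add_angle_eq_of_sbtw (p := A) h₂]
  have E₁ : Real.sin (∠ P₂ A C) * (dist B A * dist P₁ A) = s₁ * K := by
    rw [← hiso, sin_angle_mul_dist_mul_dist, cross_lineMap_right, abs_mul, abs_of_pos hs₁]
  have E₂ : Real.sin (∠ P₂ A C) * (dist P₂ A * dist C A) = (1 - s₂) * K := by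
    rw [sin_angle_mul_dist_mul_dist, cross_lineMap_left, abs_mul, abs_of_pos (sub_pos.2 hs₂')]
  have E₃ : Real.sin (∠ B A P₂) * (dist B A * dist P₂ A) = s₂ * K := by
    rw [sin_angle_mul_dist_mul_dist, cross_lineMap_right, abs_mul, abs_of_pos hs₂]
  have E₄ : Real.sin (∠ B A P₂) * (dist P₁ A * dist C A) = (1 - s₁) * K := by
    rw [← hcompl, sin_angle_mul_dist_mul_dist, cross_lineMap_left, abs_mul,
      abs_of_pos (sub_pos.2 hs₁')]
  apply mul_right_cancel₀ (pow_ne_zero 2 hK)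
  rw [dist_comm A C, dist_comm A B]
  linear_combination dist B A ^ 2 * congr($E₂ * $E₄) - dist C A ^ 2 * congr($E₁ * $E₃)

def lineEval (P : Pt) : (Fin 3 → ℝ) →ₗ[ℝ] ℝ where
  toFun L := L 0 * P 0 + L 1 * P 1 + L 2
  map_add' L M := by simp only [Pi.add_apply]; ring
  map_smul' c L := by simp only [Pi.smul_apply, smul_eq_mul, RingHom.id_apply]; ring

lemma lineEval_lineMap (B C : Pt) (s : ℝ) (L : Fin 3 → ℝ) :
    lineEval (lineMap B C s) L = (1 - s) * lineEval B L + s * lineEval C L := by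
  simp only [lineEval, LinearMap.coe_mk, AddHom.coe_mk, lineMap_apply_module', PiLp.add_apply,
    PiLp.sub_apply, PiLp.smul_apply, smul_eq_mul]
  ring

open QuadraticMap in
/-- The dual conic `x a² + y b² + z c² + f b c + g c a + h a b`, where `a, b, c` are the values
at `A, B, C` of the equation of the line. -/
def triangleConic (A B C : Pt) (x y z f g h : ℝ) : QuadraticForm ℝ (Fin 3 → ℝ) :=
  x • linMulLin (lineEval A) (lineEval A) + y • linMulLin (lineEval B) (lineEval B) +
    z • linMulLin (lineEval C) (lineEval C) + f • linMulLin (lineEval B) (lineEval C) +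
    g • linMulLin (lineEval C) (lineEval A) + h • linMulLin (lineEval A) (lineEval B)

section triangleConic

variable {A B C : Pt} {x y z f g h : ℝ}

lemma triangleConic_apply (L : Fin 3 → ℝ) :
    triangleConic A B C x y z f g h L =
      x * lineEval A L ^ 2 + y * lineEval B L ^ 2 + z * lineEval C L ^ 2 +
        f * lineEval B L * lineEval C L + g * lineEval C L * lineEval A L +
        h * lineEval A L * lineEval B L := by
  simp only [triangleConic, add_apply, smul_apply, QuadraticMap.linMulLin_apply,
    smul_eq_mul]
  ring

lemma triangleConic_rotate :
    triangleConic A B C x y z f g h = triangleConic B C A y z x g h f := by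
  ext L
  simp only [triangleConic_apply]
  ring

lemma triangleConic_ne_zero (hABC : ¬ Collinear ℝ {B, A, C}) (hy : y ≠ 0) :
    triangleConic A B C x y z f g h ≠ 0 := by
  intro h0
  let L : Fin 3 → ℝ := ![C 1 - A 1, A 0 - C 0, A 1 * C 0 - A 0 * C 1]
  have hev (X : Pt) : lineEval X L = cross (X - A) (C - A) := by
    simp only [L, lineEval, LinearMap.coe_mk, AddHom.coe_mk, Matrix.cons_val_zero,
      Matrix.cons_val_one, Matrix.cons_val, cross, PiLp.sub_apply]
    ring
  have hval : triangleConic A B C x y z f g h L = y * cross (B - A) (C - A) ^ 2 := by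
    simp only [triangleConic_apply, hev, sub_self, cross, PiLp.zero_apply]
    ring
  rw [h0, zero_apply] at hval
  exact mul_ne_zero hy (pow_ne_zero 2 (cross_ne_zero_of_not_collinear hABC)) hval.symm

lemma triangleConic_eq_zero_of_cevian {k s₁ s₂ : ℝ} (hy : y = k * ((1 - s₁) * (1 - s₂)))
    (hf : f = k * (s₁ * (1 - s₂) + s₂ * (1 - s₁))) (hz : z = k * (s₁ * s₂)) (L : Fin 3 → ℝ)
    (hL : IsLineCoord A (lineMap B C s₁) L ∨ IsLineCoord A (lineMap B C s₂) L) :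
    triangleConic A B C x y z f g h L = 0 := by
  have hA : lineEval A L = 0 := by rcases hL with hL | hL <;> exact hL.2.1
  rw [triangleConic_apply, hA, hy, hf, hz]
  rcases hL with ⟨-, -, hP⟩ | ⟨-, -, hP⟩
  · change lineEval _ L = 0 at hP
    rw [lineEval_lineMap] at hP
    linear_combination k * ((1 - s₂) * lineEval B L + s₂ * lineEval C L) * hP
  · change lineEval _ L = 0 at hP
    rw [lineEval_lineMap] at hP
    linear_combination k * ((1 - s₁) * lineEval B L + s₁ * lineEval C L) * hP

end triangleConic

theorem touchCommonConic_of_carnot {A B C : Pt} (hABC : ¬ Collinear ℝ {B, A, C})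
    {s₁ s₂ u₁ u₂ v₁ v₂ : ℝ}
    (hne : (1 - s₁) * (1 - s₂) * ((1 - u₁) * (1 - u₂)) * ((1 - v₁) * (1 - v₂)) ≠ 0)
    (hcarnot : s₁ * s₂ * (u₁ * u₂) * (v₁ * v₂) =
      (1 - s₁) * (1 - s₂) * ((1 - u₁) * (1 - u₂)) * ((1 - v₁) * (1 - v₂))) :
    TouchCommonConic [(A, lineMap B C s₁), (A, lineMap B C s₂), (B, lineMap C A u₁),
      (B, lineMap C A u₂), (C, lineMap A B v₁), (C, lineMap A B v₂)] := by
  -- On the pencil through each vertex `Q` is a multiple of the product of the two cevian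
  -- equations; the three multiples are compatible exactly under the Carnot relation.
  set Q := triangleConic A B C
    (s₁ * s₂ * (u₁ * u₂) * ((1 - v₁) * (1 - v₂)))
    ((1 - s₁) * (1 - s₂) * ((1 - u₁) * (1 - u₂)) * ((1 - v₁) * (1 - v₂)))
    (s₁ * s₂ * ((1 - u₁) * (1 - u₂)) * ((1 - v₁) * (1 - v₂)))
    ((s₁ * (1 - s₂) + s₂ * (1 - s₁)) * ((1 - u₁) * (1 - u₂)) * ((1 - v₁) * (1 - v₂)))
    (s₁ * s₂ * (u₁ * (1 - u₂) + u₂ * (1 - u₁)) * ((1 - v₁) * (1 - v₂)))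
    (s₁ * s₂ * (u₁ * u₂) * (v₁ * (1 - v₂) + v₂ * (1 - v₁))) with hQ
  have hA : ∀ L, IsLineCoord A (lineMap B C s₁) L ∨ IsLineCoord A (lineMap B C s₂) L →
      Q L = 0 :=
    triangleConic_eq_zero_of_cevian (k := (1 - u₁) * (1 - u₂) * ((1 - v₁) * (1 - v₂)))
      (by ring) (by ring) (by ring)
  have hB : ∀ L, IsLineCoord B (lineMap C A u₁) L ∨ IsLineCoord B (lineMap C A u₂) L →
      Q L = 0 := by
    rw [hQ, triangleConic_rotate]
    exact triangleConic_eq_zero_of_cevian (k := s₁ * s₂ * ((1 - v₁) * (1 - v₂)))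
      (by ring) (by ring) (by ring)
  have hC : ∀ L, IsLineCoord C (lineMap A B v₁) L ∨ IsLineCoord C (lineMap A B v₂) L →
      Q L = 0 := by
    rw [hQ, triangleConic_rotate, triangleConic_rotate]
    exact triangleConic_eq_zero_of_cevian (k := s₁ * s₂ * (u₁ * u₂))
      (by ring) (by ring) (by linear_combination -hcarnot)
  refine ⟨Q, triangleConic_ne_zero hABC hne, ?_⟩
  simp only [List.mem_cons, List.not_mem_nil, or_false]
  rintro _ (rfl | rfl | rfl | rfl | rfl | rfl) L hL
  exacts [hA L (.inl hL), hA L (.inr hL), hB L (.inl hL), hB L (.inr hL), hC L (.inl hL),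
    hC L (.inr hL)]

theorem touchCommonConic_of_isogonal {A B C : Pt} {s₁ s₂ u₁ u₂ v₁ v₂ : ℝ}
    (hABC : ¬ Collinear ℝ {A, B, C})
    (hs₁ : Sbtw ℝ B (lineMap B C s₁) C) (hs₂ : Sbtw ℝ B (lineMap B C s₂) C)
    (hu₁ : Sbtw ℝ C (lineMap C A u₁) A) (hu₂ : Sbtw ℝ C (lineMap C A u₂) A)
    (hv₁ : Sbtw ℝ A (lineMap A B v₁) B) (hv₂ : Sbtw ℝ A (lineMap A B v₂) B)
    (hA : ∠ B A (lineMap B C s₁) = ∠ (lineMap B C s₂) A C)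
    (hB : ∠ C B (lineMap C A u₁) = ∠ (lineMap C A u₂) B A)
    (hC : ∠ A C (lineMap A B v₁) = ∠ (lineMap A B v₂) C B) :
    TouchCommonConic [(A, lineMap B C s₁), (A, lineMap B C s₂), (B, lineMap C A u₁),
      (B, lineMap C A u₂), (C, lineMap A B v₁), (C, lineMap A B v₂)] := by
  have hBAC : ¬ Collinear ℝ {B, A, C} := by rwa [Set.insert_comm]
  have hCBA : ¬ Collinear ℝ {C, B, A} := by
    rwa [Set.insert_comm, Set.pair_comm, Set.insert_comm]
  have hACB : ¬ Collinear ℝ {A, C, B} := by rwa [Set.pair_comm]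
  have RA := mul_dist_sq_eq_of_isogonal hBAC hs₁ hs₂ hA
  have RB := mul_dist_sq_eq_of_isogonal hCBA hu₁ hu₂ hB
  have RC := mul_dist_sq_eq_of_isogonal hACB hv₁ hv₂ hC
  rw [dist_comm A C] at RA
  rw [dist_comm B A] at RB
  rw [dist_comm C B] at RC
  have one_sub_ne {P Q : Pt} {t : ℝ} (h : Sbtw ℝ P (lineMap P Q t) Q) : 1 - t ≠ 0 :=
    sub_ne_zero.2 (sbtw_lineMap_iff.1 h).2.2.ne'
  have hD : (dist A B * dist B C * dist C A) ^ 2 ≠ 0 :=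
    pow_ne_zero 2 (mul_ne_zero (mul_ne_zero (dist_ne_zero.2 (ne₁₂_of_not_collinear hABC))
      (dist_ne_zero.2 (ne₂₃_of_not_collinear hABC)))
      (dist_ne_zero.2 (ne₁₃_of_not_collinear hABC).symm))
  refine touchCommonConic_of_carnot hBAC
    (mul_ne_zero (mul_ne_zero (mul_ne_zero (one_sub_ne hs₁) (one_sub_ne hs₂))
      (mul_ne_zero (one_sub_ne hu₁) (one_sub_ne hu₂)))
      (mul_ne_zero (one_sub_ne hv₁) (one_sub_ne hv₂))) (mul_right_cancel₀ hD ?_)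
  linear_combination
    (u₁ * u₂ * dist A B ^ 2) * (v₁ * v₂ * dist B C ^ 2) * RA +
    ((1 - s₁) * (1 - s₂) * dist A B ^ 2) * (v₁ * v₂ * dist B C ^ 2) * RB +
    ((1 - s₁) * (1 - s₂) * dist A B ^ 2) * ((1 - u₁) * (1 - u₂) * dist B C ^ 2) * RC

end Morley

/-- Morley inscribed-conic corollary: the six trisector cevian lines of a triangle
touch a common conic (dual formulation). -/
theorem morley_trisector_lines_touch_common_conic
    (A B C A₁ A₂ B₁ B₂ C₁ C₂ : Pt)
    (hABC : AffineIndependent ℝ ![A, B, C])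
    (hA₁ : Sbtw ℝ B A₁ C) (haA₁ : ∠ B A A₁ = ∠ B A C / 3)
    (hA₂ : Sbtw ℝ B A₂ C) (haA₂ : ∠ C A A₂ = ∠ B A C / 3)
    (hB₁ : Sbtw ℝ C B₁ A) (haB₁ : ∠ C B B₁ = ∠ A B C / 3)
    (hB₂ : Sbtw ℝ C B₂ A) (haB₂ : ∠ A B B₂ = ∠ A B C / 3)
    (hC₁ : Sbtw ℝ A C₁ B) (haC₁ : ∠ A C C₁ = ∠ B C A / 3)
    (hC₂ : Sbtw ℝ A C₂ B) (haC₂ : ∠ B C C₂ = ∠ B C A / 3) :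
    TouchCommonConic [(A, A₁), (A, A₂), (B, B₁), (B, B₂), (C, C₁), (C, C₂)] := by
  obtain ⟨s₁, -, rfl⟩ := hA₁.mem_image_Ioo
  obtain ⟨s₂, -, rfl⟩ := hA₂.mem_image_Ioo
  obtain ⟨u₁, -, rfl⟩ := hB₁.mem_image_Ioo
  obtain ⟨u₂, -, rfl⟩ := hB₂.mem_image_Ioo
  obtain ⟨v₁, -, rfl⟩ := hC₁.mem_image_Ioo
  obtain ⟨v₂, -, rfl⟩ := hC₂.mem_image_Ioo
  exact Morley.touchCommonConic_of_isogonal (affineIndependent_iff_not_collinear_set.1 hABC)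
    hA₁ hA₂ hB₁ hB₂ hC₁ hC₂ (haA₁.trans (haA₂.symm.trans (angle_comm _ _ _)))
    (haB₁.trans (haB₂.symm.trans (angle_comm _ _ _)))
    (haC₁.trans (haC₂.symm.trans (angle_comm _ _ _)))
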